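/- Equivalence of the WMMSE surrogate and the rate: min over v and μ > 0 of μ·ε(v) − log μ equals −log(1+γ) + 1, where ε(v) is the MSE as a function of the receiver v with minimum ε^MMSE = 1/(1+γ). Consequently, maximizing the sum-rate is equivalent to minimizing ∑_k (μ_k ε_k − log μ_k) over receivers and positive weights. -/

import Mathlib

/-!
For fixed `v`, the map `μ ↦ μ ε(v) - log μ` is minimised at `μ = 1 / ε(v)`, with value
`1 + log ε(v)` (this is `log x ≤ x - 1`); so the infimum is `1 + log ε_min`. Writing
`S = ∑ |e_i|² + σ²`, completing the square gives `ε(v) = S |v - e_k / S|² + 1 - |e_k|² / S`, so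
`ε_min = 1 - |e_k|² / S = 1 / (1 + γ)`, attained at the MMSE receiver `v = e_k / S`.
-/

open Real Set

theorem one_add_log_le_mul_sub_log {c μ : ℝ} (hc : 0 < c) (hμ : 0 < μ) :
    1 + log c ≤ μ * c - log μ := by
  have h := log_le_sub_one_of_pos (mul_pos hμ hc)
  rw [log_mul hμ.ne' hc.ne'] at h
  linarith

theorem inv_mul_sub_log_inv {c : ℝ} (hc : 0 < c) : c⁻¹ * c - log c⁻¹ = 1 + log c := by
  rw [log_inv, inv_mul_cancel₀ hc.ne']
  ring

theorem sInf_mul_sub_log_eq_one_add_log {α : Type*} {f : α → ℝ} {c : ℝ} (hc : 0 < c)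
    (hf : IsLeast (range f) c) :
    sInf {x : ℝ | ∃ (v : α) (μ : ℝ), 0 < μ ∧ x = μ * f v - log μ} = 1 + log c := by
  obtain ⟨⟨v₀, hv₀⟩, hfc⟩ := hf
  refine IsLeast.csInf_eq ⟨⟨v₀, c⁻¹, inv_pos.2 hc, ?_⟩, ?_⟩
  · rw [hv₀, inv_mul_sub_log_inv hc]
  · rintro x ⟨v, μ, hμ, rfl⟩
    calc 1 + log c ≤ μ * c - log μ := one_add_log_le_mul_sub_log hc hμ
      _ ≤ μ * f v - log μ := by gcongr; exact hfc ⟨v, rfl⟩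

theorem isLeast_range_norm_sq_mul_sub_inner {E : Type*} [NormedAddCommGroup E]
    [InnerProductSpace ℝ E] {S : ℝ} (hS : 0 < S) (b : E) :
    IsLeast (range fun v : E => ‖v‖ ^ 2 * S - 2 * inner ℝ v b + 1) (1 - ‖b‖ ^ 2 / S) := by
  have complete_square : ∀ v : E, ‖v‖ ^ 2 * S - 2 * inner ℝ v b + 1
      = S * ‖v - S⁻¹ • b‖ ^ 2 + (1 - ‖b‖ ^ 2 / S) := by
    intro v
    rw [norm_sub_sq_real, norm_smul, inner_smul_right, Real.norm_of_nonneg (inv_pos.2 hS).le]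
    field_simp
    ring
  refine ⟨⟨S⁻¹ • b, ?_⟩, ?_⟩
  · simp only [complete_square, sub_self, norm_zero]
    ring
  · rintro _ ⟨v, rfl⟩
    simp only [complete_square]
    exact le_add_of_nonneg_left (by positivity)

theorem log_one_sub_div_add_eq_neg_log_one_add_div {a T : ℝ} (ha : 0 ≤ a) (hT : 0 < T) :
    log (1 - a / (a + T)) = -log (1 + a / T) := by
  have : 0 < a + T := by linarith
  rw [← log_inv]
  congr 1
  field_simp
  ring

/-- Equivalence of the WMMSE surrogate and the rate:
`inf_{v ∈ ℂ, μ > 0} [μ ε(v) − log μ] = 1 − log(1 + γ)`, where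
`ε(v) = |v|²(∑_i|e_i|² + σ²) − 2Re(v* e_k) + 1` and
`γ = |e_k|²/(σ² + ∑_{i≠k}|e_i|²)`. -/
theorem wmmse_rate_equivalence (K : ℕ) (e : Fin K → ℂ) (k : Fin K)
    (σ2 : ℝ) (hσ : 0 < σ2) (ε : ℂ → ℝ)
    (hε : ∀ v : ℂ, ε v = ‖v‖ ^ 2 * ((∑ i, ‖e i‖ ^ 2) + σ2)
      - 2 * ((starRingEnd ℂ) v * e k).re + 1) :
    sInf {x : ℝ | ∃ (v : ℂ) (μ : ℝ), 0 < μ ∧ x = μ * ε v - Real.log μ} =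
      1 - Real.log (1 + ‖e k‖ ^ 2 /
        (σ2 + ∑ i ∈ Finset.univ.erase k, ‖e i‖ ^ 2)) := by
  set T := σ2 + ∑ i ∈ Finset.univ.erase k, ‖e i‖ ^ 2
  have hT : 0 < T := add_pos_of_pos_of_nonneg hσ (Finset.sum_nonneg fun i _ => by positivity)
  have hsum : (∑ i, ‖e i‖ ^ 2) + σ2 = ‖e k‖ ^ 2 + T := by
    rw [← Finset.add_sum_erase _ _ (Finset.mem_univ k)]
    ring
  have hε_inner : ε = fun v => ‖v‖ ^ 2 * (‖e k‖ ^ 2 + T) - 2 * inner ℝ v (e k) + 1 := by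
    funext v
    rw [hε, hsum, Complex.inner, mul_comm (e k)]
  have hmin := isLeast_range_norm_sq_mul_sub_inner (by positivity : 0 < ‖e k‖ ^ 2 + T) (e k)
  rw [← hε_inner] at hmin
  have hpos : 0 < 1 - ‖e k‖ ^ 2 / (‖e k‖ ^ 2 + T) := by
    rw [sub_pos, div_lt_one (by positivity)]
    linarith
  rw [sInf_mul_sub_log_eq_one_add_log hpos hmin,
    log_one_sub_div_add_eq_neg_log_one_add_div (by positivity) hT, sub_eq_add_neg]
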